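/- arXiv:2208.12838 — 2 statements merged into one kernel-verified Lean document; each statement's English description precedes it below -/
import Mathlib

section
/- (Likelihood-ratio representation of the Black–Scholes Delta, Eq. (bs_delta).) Let h : (0,∞) → ℝ be measurable with |h(y)| ≤ C(1 + y) for some C ≥ 0, and let r ∈ ℝ, v > 0, τ > 0. Set μ = (r − v/2)τ and let γ be the Gaussian measure on ℝ with mean μ and variance vτ. Then the function u(x) := e^{−rτ} ∫_ℝ h(x·e^z) γ(dz) is differentiable on (0,∞) and u'(x) = e^{−rτ} ∫_ℝ ((z − μ)/(x·v·τ)) · h(x·e^z) γ(dz) for every x > 0. -/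
/-!
The Gaussian law with mean `m'` has density `exp (((w - m) (m' - m) - (m' - m)² / 2) / v)`
with respect to the one with mean `m` (same variance `v`), and the `m'`-derivative of this
density is `(w - m') / v` times itself. Differentiating under the integral, with the growth
bound on the integrand absorbed by Gaussian exponential moments, gives the score-function formula
`d/dm ∫ f dγ_m = ∫ (w - m) / v • f w dγ_m`. Since `x e^z` with `z ~ γ_μ` is `e^w` with
`w ~ γ_{μ + log x}`, the price is this Gaussian expectation evaluated at the mean `μ + log x`,
and the chain rule contributes the factor `1 / x`.
-/

open MeasureTheory ProbabilityTheory Real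

open scoped NNReal

lemma exp_mul_abs_le (k m w : ℝ) : exp (k * |w|) ≤ exp (|k| * |m|) * exp (|k| * |w - m|) := by
  rw [← exp_add]
  refine exp_le_exp.2 ?_
  calc k * |w| ≤ |k| * |w| := mul_le_mul_of_nonneg_right (le_abs_self k) (abs_nonneg w)
    _ ≤ |k| * (|m| + |w - m|) := by
        gcongr
        simpa using abs_add_le m (w - m)
    _ = _ := by ring

namespace ProbabilityTheory

/-- Density of `gaussianReal m' v` with respect to `gaussianReal m v`. -/
noncomputable def gaussianMeanShiftDensity (m : ℝ) (v : ℝ≥0) (m' w : ℝ) : ℝ :=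
  exp (((w - m) * (m' - m) - (m' - m) ^ 2 / 2) / v)

variable {m : ℝ} {v : ℝ≥0}

@[simp]
lemma gaussianMeanShiftDensity_self (w : ℝ) : gaussianMeanShiftDensity m v m w = 1 := by
  simp [gaussianMeanShiftDensity]

lemma gaussianMeanShiftDensity_pos (m' w : ℝ) : 0 < gaussianMeanShiftDensity m v m' w :=
  exp_pos _

@[fun_prop]
lemma measurable_gaussianMeanShiftDensity (m' : ℝ) :
    Measurable (gaussianMeanShiftDensity m v m') := by
  unfold gaussianMeanShiftDensity
  fun_prop

lemma gaussianPDFReal_mul_gaussianMeanShiftDensity (hv : v ≠ 0) (m' w : ℝ) :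
    gaussianPDFReal m v w * gaussianMeanShiftDensity m v m' w = gaussianPDFReal m' v w := by
  have hv' : (v : ℝ) ≠ 0 := by exact_mod_cast hv
  rw [gaussianPDFReal, gaussianPDFReal, gaussianMeanShiftDensity, mul_assoc, ← exp_add]
  congr 2
  field_simp
  ring

lemma integral_gaussianReal_eq_integral_gaussianMeanShiftDensity_smul {E : Type*}
    [NormedAddCommGroup E] [NormedSpace ℝ E] (hv : v ≠ 0) (m' : ℝ) (f : ℝ → E) :
    ∫ w, f w ∂gaussianReal m' v =
      ∫ w, gaussianMeanShiftDensity m v m' w • f w ∂gaussianReal m v := by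
  simp only [integral_gaussianReal_eq_integral_smul hv, smul_smul,
    gaussianPDFReal_mul_gaussianMeanShiftDensity hv]

lemma hasDerivAt_gaussianMeanShiftDensity (m' w : ℝ) :
    HasDerivAt (gaussianMeanShiftDensity m v · w)
      (gaussianMeanShiftDensity m v m' w * ((w - m') / v)) m' := by
  have hlin := (hasDerivAt_id' m').sub_const m
  have h := ((hlin.const_mul (w - m)).fun_sub (hlin.fun_pow 2 |>.div_const 2)).div_const (v : ℝ)
  refine h.exp.congr_deriv ?_
  rw [gaussianMeanShiftDensity]
  ring

lemma gaussianMeanShiftDensity_le {m' : ℝ} (hm' : |m' - m| ≤ 1) (w : ℝ) :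
    gaussianMeanShiftDensity m v m' w ≤ exp (|w - m| / v) := by
  refine exp_le_exp.2 (div_le_div_of_nonneg_right ?_ v.2)
  calc (w - m) * (m' - m) - (m' - m) ^ 2 / 2 ≤ |w - m| * |m' - m| := by
        nlinarith [le_abs_self ((w - m) * (m' - m)), abs_mul (w - m) (m' - m), sq_nonneg (m' - m)]
    _ ≤ |w - m| := mul_le_of_le_one_right (abs_nonneg _) hm'

lemma integrable_exp_mul_abs_sub_gaussianReal (t c : ℝ) :
    Integrable (fun x ↦ exp (t * |x - c|)) (gaussianReal m v) := by
  refine Integrable.mono' (((integrable_exp_mul_gaussianReal t).mul_const (exp (-(t * c)))).add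
    ((integrable_exp_mul_gaussianReal (-t)).mul_const (exp (t * c)))) (by fun_prop)
    (.of_forall fun x ↦ ?_)
  simp only [Pi.add_apply, norm_of_nonneg (exp_pos _).le, ← exp_add]
  rcases abs_choice (x - c) with h | h <;> rw [h]
  · rw [show t * (x - c) = t * x + -(t * c) by ring]
    linarith [exp_pos (-t * x + t * c)]
  · rw [show t * -(x - c) = -t * x + t * c by ring]
    linarith [exp_pos (t * x + -(t * c))]

lemma gaussianMeanShiftDensity_mul_abs_sub_le {m' : ℝ} (hm' : |m' - m| ≤ 1) (w : ℝ) :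
    gaussianMeanShiftDensity m v m' w * |w - m'| ≤ exp (((v : ℝ)⁻¹ + 1) * |w - m|) := by
  have hdist : |w - m'| ≤ exp |w - m| := by
    calc |w - m'| ≤ |w - m| + |m' - m| := by
          simpa [abs_sub_comm m m'] using abs_sub_le w m m'
      _ ≤ |w - m| + 1 := by linarith
      _ ≤ exp |w - m| := add_one_le_exp _
  calc gaussianMeanShiftDensity m v m' w * |w - m'| ≤ exp (|w - m| / v) * exp |w - m| :=
        mul_le_mul (gaussianMeanShiftDensity_le hm' w) hdist (abs_nonneg _) (exp_pos _).le
    _ = exp (((v : ℝ)⁻¹ + 1) * |w - m|) := by rw [← exp_add]; ring_nf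

theorem hasDerivAt_integral_gaussianReal_mean {E : Type*} [NormedAddCommGroup E]
    [NormedSpace ℝ E] {f : ℝ → E} (hf : AEStronglyMeasurable f) {C k : ℝ}
    (hbound : ∀ w, ‖f w‖ ≤ C * exp (k * |w|)) (hv : v ≠ 0) (m : ℝ) :
    HasDerivAt (fun m' ↦ ∫ w, f w ∂gaussianReal m' v)
      (∫ w, ((w - m) / v) • f w ∂gaussianReal m v) m := by
  have hf' : AEStronglyMeasurable f (gaussianReal m v) :=
    hf.mono_ac (gaussianReal_absolutelyContinuous m hv)
  have hC : 0 ≤ C := nonneg_of_mul_nonneg_left ((norm_nonneg _).trans (hbound 0)) (exp_pos _)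
  have hgrowth (w : ℝ) : ‖f w‖ ≤ C * exp (|k| * |m|) * exp (|k| * |w - m|) := by
    rw [mul_assoc]
    exact (hbound w).trans (mul_le_mul_of_nonneg_left (exp_mul_abs_le k m w) hC)
  have hshift : (fun m' ↦ ∫ w, f w ∂gaussianReal m' v) =
      fun m' ↦ ∫ w, gaussianMeanShiftDensity m v m' w • f w ∂gaussianReal m v :=
    funext (integral_gaussianReal_eq_integral_gaussianMeanShiftDensity_smul hv · f)
  rw [hshift]
  have hderiv := hasDerivAt_integral_of_dominated_loc_of_deriv_le (μ := gaussianReal m v)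
    (F' := fun m' w ↦ (gaussianMeanShiftDensity m v m' w * ((w - m') / v)) • f w)
    (bound := fun w ↦ C * exp (|k| * |m|) / v * exp ((|k| + ((v : ℝ)⁻¹ + 1)) * |w - m|))
    (Metric.ball_mem_nhds m one_pos) (.of_forall fun m' ↦ ?_) ?_ ?_
    (.of_forall fun w m' hm' ↦ ?_) ?_
    (.of_forall fun w m' _ ↦ (hasDerivAt_gaussianMeanShiftDensity m' w).smul_const (f w))
  · simpa using hderiv.2
  · exact (measurable_gaussianMeanShiftDensity m').aestronglyMeasurable.smul hf'
  · simpa using (integrable_exp_mul_abs_sub_gaussianReal |k| m).const_mul (C * exp (|k| * |m|))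
      |>.mono' hf' (.of_forall hgrowth)
  · exact (by fun_prop : Measurable fun w ↦ gaussianMeanShiftDensity m v m w * ((w - m) / v))
      |>.aestronglyMeasurable.smul hf'
  · have hm'' : |m' - m| ≤ 1 := (Metric.mem_ball.1 hm').le
    have hvpos : (0 : ℝ) < v := by positivity
    calc ‖(gaussianMeanShiftDensity m v m' w * ((w - m') / v)) • f w‖
        = gaussianMeanShiftDensity m v m' w * |w - m'| / v * ‖f w‖ := by
          rw [norm_smul, norm_mul, norm_div, norm_of_nonneg (gaussianMeanShiftDensity_pos m' w).le,
            Real.norm_eq_abs, Real.norm_eq_abs, abs_of_pos hvpos, mul_div_assoc]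
      _ ≤ exp (((v : ℝ)⁻¹ + 1) * |w - m|) / v *
            (C * exp (|k| * |m|) * exp (|k| * |w - m|)) := by
          gcongr
          · exact gaussianMeanShiftDensity_mul_abs_sub_le hm'' w
          · exact hgrowth w
      _ = _ := by
          simp only [add_mul, exp_add]
          ring
  · exact (integrable_exp_mul_abs_sub_gaussianReal _ m).const_mul _

lemma integral_gaussianReal_comp_add_const {E : Type*} [NormedAddCommGroup E] [NormedSpace ℝ E]
    (g : ℝ → E) (y : ℝ) :
    ∫ z, g (z + y) ∂gaussianReal m v = ∫ w, g w ∂gaussianReal (m + y) v := by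
  rw [← gaussianReal_map_add_const]
  exact (integral_map_equiv (MeasurableEquiv.addRight y) g).symm

end ProbabilityTheory

/-- **Likelihood-ratio representation of the Black–Scholes Delta.**
Let `h : (0,∞) → ℝ` be measurable with `|h y| ≤ C (1 + y)`, let `r ∈ ℝ`, `v > 0`, `τ > 0`,
`μ = (r − v/2) τ`, and let `γ` be the Gaussian measure on `ℝ` with mean `μ` and variance `v τ`.
Then `u x := e^{−rτ} ∫ h(x e^z) γ(dz)` is differentiable on `(0,∞)` with derivative
`u' x = e^{−rτ} ∫ ((z − μ)/(x v τ)) h(x e^z) γ(dz)`. -/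
theorem bs_delta_likelihood_ratio
    (h : ℝ → ℝ) (hmeas : Measurable h)
    (C : ℝ) (hC : 0 ≤ C) (hbound : ∀ y : ℝ, 0 < y → |h y| ≤ C * (1 + y))
    (r v τ : ℝ) (hv : 0 < v) (hτ : 0 < τ) :
    ∀ x : ℝ, 0 < x →
      HasDerivAt
        (fun x : ℝ => Real.exp (-(r * τ)) *
          ∫ z, h (x * Real.exp z)
            ∂(gaussianReal ((r - v / 2) * τ) ((v * τ).toNNReal)))
        (Real.exp (-(r * τ)) *
          ∫ z, ((z - (r - v / 2) * τ) / (x * v * τ)) * h (x * Real.exp z)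
            ∂(gaussianReal ((r - v / 2) * τ) ((v * τ).toNNReal))) x := by
  intro x hx
  set μ := (r - v / 2) * τ
  have hvτ : 0 < v * τ := mul_pos hv hτ
  have hV : ((v * τ).toNNReal : ℝ) = v * τ := Real.coe_toNNReal _ hvτ.le
  have hgrowth : ∀ w, ‖h (exp w)‖ ≤ 2 * C * exp (1 * |w|) := fun w ↦ by
    have : 1 + exp w ≤ 2 * exp |w| := by
      linarith [one_le_exp (abs_nonneg w), exp_le_exp.2 (le_abs_self w)]
    rw [one_mul, Real.norm_eq_abs, mul_assoc]
    exact (hbound _ (exp_pos w)).trans (by nlinarith)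
  have hmean := hasDerivAt_integral_gaussianReal_mean
    (hmeas.comp measurable_exp).aestronglyMeasurable hgrowth (Real.toNNReal_pos.2 hvτ).ne'
    (μ + log x)
  have hprice := (hmean.comp x ((hasDerivAt_log hx.ne').const_add μ)).const_mul (exp (-(r * τ)))
  refine (hprice.congr_deriv ?_).congr_of_eventuallyEq
    (eventually_gt_nhds hx |>.mono fun y hy ↦ ?_)
  · rw [← integral_gaussianReal_comp_add_const (E := ℝ), ← integral_mul_const]
    congr 2 with z
    simp only [Function.comp_apply, exp_add, exp_log hx, hV, smul_eq_mul]
    field_simp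
    ring
  · simp only [Function.comp_apply, ← integral_gaussianReal_comp_add_const, exp_add, exp_log hy,
      mul_comm y]
end

section
/- (Monotonicity of the Black–Scholes price in the variance parameter for convex payoffs.) Let g : (0,∞) → ℝ be convex with |g(y)| ≤ C(1 + y) for some C ≥ 0, let r ∈ ℝ, δ > 0 and x > 0. For θ > 0 let γ_θ be the Gaussian measure on ℝ with mean (r − θ/2)δ and variance θδ. Then the map θ ↦ e^{−rδ} ∫_ℝ g(x·e^z) γ_θ(dz) is nondecreasing on (0,∞). -/
open MeasureTheory ProbabilityTheory Real
open scoped ENNReal NNReal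

namespace BSProof



lemma pdf_eq (m : ℝ) {v : ℝ} (hv : 0 < v) (z : ℝ) :
    gaussianPDFReal m v.toNNReal z
      = (Real.sqrt (2 * π * v))⁻¹ * Real.exp (-(z - m)^2 / (2 * v)) := by
  rw [gaussianPDFReal, Real.coe_toNNReal _ hv.le]

lemma pdf_conv (m₁ m₂ : ℝ) {v₁ v₂ : ℝ} (h₁ : 0 < v₁) (h₂ : 0 < v₂) (t z : ℝ) :
    gaussianPDFReal m₁ v₁.toNNReal z * gaussianPDFReal m₂ v₂.toNNReal (t - z)
      = gaussianPDFReal (m₁ + m₂) (v₁ + v₂).toNNReal t *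
        gaussianPDFReal ((v₂ * m₁ + v₁ * (t - m₂)) / (v₁ + v₂))
          (v₁ * v₂ / (v₁ + v₂)).toNNReal z := by
  have h12 : 0 < v₁ + v₂ := by linarith
  have hs : 0 < v₁ * v₂ / (v₁ + v₂) := by positivity
  rw [pdf_eq _ h₁, pdf_eq _ h₂, pdf_eq _ h12, pdf_eq _ hs,
    mul_mul_mul_comm, mul_mul_mul_comm ((Real.sqrt (2 * π * (v₁ + v₂)))⁻¹)]
  congr 1
  · rw [← mul_inv, ← mul_inv, ← Real.sqrt_mul (by positivity), ← Real.sqrt_mul (by positivity)]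
    congr 2
    field_simp
  · rw [← Real.exp_add, ← Real.exp_add]
    congr 1
    field_simp
    ring

lemma toNNReal_ne_zero {v : ℝ} (hv : 0 < v) : v.toNNReal ≠ 0 :=
  fun h => absurd (Real.toNNReal_eq_zero.mp h) (not_le.2 hv)

lemma gaussian_map_add (m₁ m₂ : ℝ) {v₁ v₂ : ℝ} (h₁ : 0 < v₁) (h₂ : 0 < v₂) :
    Measure.map (fun p : ℝ × ℝ => p.1 + p.2)
      ((gaussianReal m₁ v₁.toNNReal).prod (gaussianReal m₂ v₂.toNNReal))
      = gaussianReal (m₁ + m₂) (v₁ + v₂).toNNReal := by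
  have h12 : 0 < v₁ + v₂ := by linarith
  have hs : 0 < v₁ * v₂ / (v₁ + v₂) := by positivity
  ext s hs_meas
  rw [Measure.map_apply measurable_add hs_meas,
    Measure.prod_apply (measurable_add hs_meas)]
  have key : ∀ z : ℝ, (gaussianReal m₂ v₂.toNNReal)
      (Prod.mk z ⁻¹' ((fun p : ℝ × ℝ => p.1 + p.2) ⁻¹' s))
      = ∫⁻ t, s.indicator (fun t => ENNReal.ofReal (gaussianPDFReal m₂ v₂.toNNReal (t - z))) t := by
    intro z
    have hmeas : MeasurableSet (Prod.mk z ⁻¹' ((fun p : ℝ × ℝ => p.1 + p.2) ⁻¹' s)) :=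
      measurable_prodMk_left (measurable_add hs_meas)
    rw [gaussianReal_of_var_ne_zero _ (toNNReal_ne_zero h₂),
      withDensity_apply _ hmeas, ← lintegral_indicator hmeas]
    rw [← lintegral_add_left_eq_self
      (fun t => s.indicator (fun t => ENNReal.ofReal (gaussianPDFReal m₂ v₂.toNNReal (t - z))) t) z]
    congr 1
    ext w
    by_cases h : z + w ∈ s
    · simp [Set.indicator_apply, h, Set.mem_preimage, gaussianPDF_def]
    · simp [Set.indicator_apply, h, Set.mem_preimage, gaussianPDF_def]
  simp_rw [key]
  -- express outer integral via density
  rw [gaussianReal_of_var_ne_zero _ (toNNReal_ne_zero h₁)]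
  have hF : Measurable (Function.uncurry fun z t =>
      s.indicator (fun t => ENNReal.ofReal (gaussianPDFReal m₂ v₂.toNNReal (t - z))) t) := by
    apply Measurable.indicator
    · exact (ENNReal.measurable_ofReal.comp ((measurable_gaussianPDFReal _ _).comp
        (measurable_snd.sub measurable_fst)))
    · exact measurable_snd hs_meas
  have hmeas_outer : Measurable (fun z => ∫⁻ t,
      s.indicator (fun t => ENNReal.ofReal (gaussianPDFReal m₂ v₂.toNNReal (t - z))) t) :=
    hF.lintegral_prod_right
  rw [lintegral_withDensity_eq_lintegral_mul _ (measurable_gaussianPDF _ _) hmeas_outer]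
  simp only [Pi.mul_apply, gaussianPDF_def]
  have step : ∀ z : ℝ, ENNReal.ofReal (gaussianPDFReal m₁ v₁.toNNReal z) *
      ∫⁻ t, s.indicator (fun t => ENNReal.ofReal (gaussianPDFReal m₂ v₂.toNNReal (t - z))) t
      = ∫⁻ t, s.indicator (fun t => ENNReal.ofReal (gaussianPDFReal m₁ v₁.toNNReal z)
          * ENNReal.ofReal (gaussianPDFReal m₂ v₂.toNNReal (t - z))) t := by
    intro z
    rw [← lintegral_const_mul' _ _ ENNReal.ofReal_ne_top]
    congr 1
    ext t
    by_cases h : t ∈ s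
    · simp [Set.indicator_of_mem h]
    · simp [Set.indicator_of_notMem h]
  simp_rw [step]
  rw [lintegral_lintegral_swap]
  swap
  · exact (Measurable.indicator ((ENNReal.measurable_ofReal.comp
      ((measurable_gaussianPDFReal _ _).comp measurable_fst)).mul
      (ENNReal.measurable_ofReal.comp ((measurable_gaussianPDFReal _ _).comp
        (measurable_snd.sub measurable_fst))))
      (measurable_snd hs_meas)).aemeasurable
  have inner : ∀ t : ℝ, (∫⁻ z, ENNReal.ofReal (gaussianPDFReal m₁ v₁.toNNReal z)
      * ENNReal.ofReal (gaussianPDFReal m₂ v₂.toNNReal (t - z)))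
      = ENNReal.ofReal (gaussianPDFReal (m₁ + m₂) (v₁ + v₂).toNNReal t) := by
    intro t
    have : ∀ z : ℝ, ENNReal.ofReal (gaussianPDFReal m₁ v₁.toNNReal z)
        * ENNReal.ofReal (gaussianPDFReal m₂ v₂.toNNReal (t - z))
        = ENNReal.ofReal (gaussianPDFReal (m₁ + m₂) (v₁ + v₂).toNNReal t)
          * ENNReal.ofReal (gaussianPDFReal ((v₂ * m₁ + v₁ * (t - m₂)) / (v₁ + v₂))
              (v₁ * v₂ / (v₁ + v₂)).toNNReal z) := by
      intro z
      rw [← ENNReal.ofReal_mul (gaussianPDFReal_nonneg _ _ _),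
        ← ENNReal.ofReal_mul (gaussianPDFReal_nonneg _ _ _), pdf_conv m₁ m₂ h₁ h₂ t z]
    simp_rw [this]
    rw [lintegral_const_mul' _ _ ENNReal.ofReal_ne_top]
    have : (∫⁻ z, ENNReal.ofReal (gaussianPDFReal ((v₂ * m₁ + v₁ * (t - m₂)) / (v₁ + v₂))
        (v₁ * v₂ / (v₁ + v₂)).toNNReal z)) = 1 := by
      simpa [gaussianPDF_def] using
        lintegral_gaussianPDF_eq_one ((v₂ * m₁ + v₁ * (t - m₂)) / (v₁ + v₂))
          (toNNReal_ne_zero hs)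
    rw [this, mul_one]
  have swap_indicator : ∀ t : ℝ, (∫⁻ z, s.indicator
      (fun t => ENNReal.ofReal (gaussianPDFReal m₁ v₁.toNNReal z)
        * ENNReal.ofReal (gaussianPDFReal m₂ v₂.toNNReal (t - z))) t)
      = s.indicator (fun t => ENNReal.ofReal (gaussianPDFReal (m₁ + m₂) (v₁ + v₂).toNNReal t)) t := by
    intro t
    by_cases ht : t ∈ s
    · simp only [Set.indicator_of_mem ht]
      exact inner t
    · simp [Set.indicator_of_notMem ht]
  simp_rw [swap_indicator]
  rw [gaussianReal_of_var_ne_zero _ (toNNReal_ne_zero h12), withDensity_apply _ hs_meas,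
    ← lintegral_indicator hs_meas]
  simp [gaussianPDF_def]



lemma exp_mul_pdf (m : ℝ) {v : ℝ} (hv : 0 < v) (z : ℝ) :
    Real.exp z * gaussianPDFReal m v.toNNReal z
      = Real.exp (m + v / 2) * gaussianPDFReal (m + v) v.toNNReal z := by
  rw [pdf_eq _ hv, pdf_eq _ hv, ← mul_assoc, mul_comm (rexp z), mul_assoc, mul_assoc,
    ← Real.exp_add, mul_comm (rexp (m + v / 2)), mul_assoc, ← Real.exp_add]
  congr 2
  field_simp
  ring

lemma integral_gaussianReal (m : ℝ) {v : ℝ} (hv : 0 < v) (f : ℝ → ℝ) :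
    ∫ z, f z ∂(gaussianReal m v.toNNReal)
      = ∫ z, gaussianPDFReal m v.toNNReal z * f z := by
  rw [gaussianReal_of_var_ne_zero _ (toNNReal_ne_zero hv)]
  have hd : volume.withDensity (gaussianPDF m v.toNNReal)
      = volume.withDensity (fun z => ((gaussianPDFReal m v.toNNReal z).toNNReal : ℝ≥0∞)) := by
    simp [gaussianPDF_def, ENNReal.ofReal]
  rw [hd, integral_withDensity_eq_integral_smul
    (measurable_gaussianPDFReal m v.toNNReal).real_toNNReal f]
  congr 1
  ext z
  simp [NNReal.smul_def, Real.coe_toNNReal _ (gaussianPDFReal_nonneg _ _ _)]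

lemma integrable_gaussianReal_iff (m : ℝ) {v : ℝ} (hv : 0 < v) (f : ℝ → ℝ) :
    Integrable f (gaussianReal m v.toNNReal)
      ↔ Integrable (fun z => f z * gaussianPDFReal m v.toNNReal z) := by
  rw [gaussianReal_of_var_ne_zero _ (toNNReal_ne_zero hv),
    integrable_withDensity_iff (measurable_gaussianPDF m v.toNNReal)
      (Filter.Eventually.of_forall fun _ => ENNReal.ofReal_lt_top)]
  constructor <;> intro h <;> refine h.congr (Filter.Eventually.of_forall fun z => ?_) <;>
    simp [gaussianPDF_def, ENNReal.toReal_ofReal (gaussianPDFReal_nonneg _ _ _)]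

lemma integrable_exp_gaussian (m : ℝ) {v : ℝ} (hv : 0 < v) :
    Integrable (fun z => Real.exp z) (gaussianReal m v.toNNReal) := by
  rw [integrable_gaussianReal_iff m hv]
  have : (fun z => Real.exp z * gaussianPDFReal m v.toNNReal z)
      = fun z => Real.exp (m + v / 2) * gaussianPDFReal (m + v) v.toNNReal z := by
    ext z; exact exp_mul_pdf m hv z
  rw [this]
  exact (integrable_gaussianPDFReal (m + v) v.toNNReal).const_mul _

lemma integral_exp_gaussian (m : ℝ) {v : ℝ} (hv : 0 < v) :
    ∫ z, Real.exp z ∂(gaussianReal m v.toNNReal) = Real.exp (m + v / 2) := by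
  rw [integral_gaussianReal m hv]
  have : (fun z => gaussianPDFReal m v.toNNReal z * Real.exp z)
      = fun z => Real.exp (m + v / 2) * gaussianPDFReal (m + v) v.toNNReal z := by
    ext z; rw [mul_comm]; exact exp_mul_pdf m hv z
  rw [this, integral_const_mul, integral_gaussianPDFReal_eq_one _ (toNNReal_ne_zero hv), mul_one]

variable {g : ℝ → ℝ} {C : ℝ}

lemma payoff_continuous (hconv : ConvexOn ℝ (Set.Ioi (0 : ℝ)) g) {x : ℝ} (hx : 0 < x) :
    Continuous (fun z => g (x * Real.exp z)) :=
  (hconv.continuousOn isOpen_Ioi).comp_continuous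
    (continuous_const.mul Real.continuous_exp) (fun z => mul_pos hx (Real.exp_pos z))

lemma integrable_payoff (hconv : ConvexOn ℝ (Set.Ioi (0 : ℝ)) g)
    (hC : 0 ≤ C) (hbound : ∀ y : ℝ, 0 < y → |g y| ≤ C * (1 + y))
    {x : ℝ} (hx : 0 < x) (m : ℝ) {v : ℝ} (hv : 0 < v) :
    Integrable (fun z => g (x * Real.exp z)) (gaussianReal m v.toNNReal) := by
  have hb : Integrable (fun z => C * (1 + x * Real.exp z)) (gaussianReal m v.toNNReal) :=
    (((integrable_const (1 : ℝ)).add ((integrable_exp_gaussian m hv).const_mul x)).const_mul C)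
  refine hb.mono (payoff_continuous hconv hx).aestronglyMeasurable ?_
  refine Filter.Eventually.of_forall fun z => ?_
  have hy : 0 < x * Real.exp z := mul_pos hx (Real.exp_pos z)
  have h1 : |g (x * Real.exp z)| ≤ C * (1 + x * Real.exp z) := hbound _ hy
  have h2 : 0 ≤ C * (1 + x * Real.exp z) := by positivity
  calc ‖g (x * Real.exp z)‖ = |g (x * Real.exp z)| := Real.norm_eq_abs _
    _ ≤ C * (1 + x * Real.exp z) := h1
    _ ≤ ‖C * (1 + x * Real.exp z)‖ := le_abs_self _

lemma exists_support_line (hconv : ConvexOn ℝ (Set.Ioi (0 : ℝ)) g)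
    {a : ℝ} (ha : 0 < a) : ∃ c : ℝ, ∀ y, 0 < y → g a + c * (y - a) ≤ g y := by
  set S : Set ℝ := (fun u => (g a - g u) / (a - u)) '' Set.Ioo 0 a with hS
  have hne : S.Nonempty := ⟨_, ⟨a / 2, ⟨by linarith, by linarith⟩, rfl⟩⟩
  have hub : ∀ s ∈ S, s ≤ (g (a + 1) - g a) / (a + 1 - a) := by
    rintro _ ⟨u, hu, rfl⟩
    have := hconv.slope_mono_adjacent (Set.mem_Ioi.2 hu.1)
      (Set.mem_Ioi.2 (by linarith : (0:ℝ) < a + 1)) hu.2 (by linarith)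
    simpa [slope_def_field] using this
  have hbdd : BddAbove S := ⟨_, hub⟩
  refine ⟨sSup S, fun y hy => ?_⟩
  rcases lt_trichotomy y a with hya | hya | hya
  · have hmem : (g a - g y) / (a - y) ∈ S := ⟨y, ⟨hy, hya⟩, rfl⟩
    have hle : (g a - g y) / (a - y) ≤ sSup S := le_csSup hbdd hmem
    have hpos : 0 < a - y := by linarith
    rw [div_le_iff₀ hpos] at hle
    nlinarith
  · subst hya; simp
  · have hle : sSup S ≤ (g y - g a) / (y - a) := by
      refine csSup_le hne ?_
      rintro _ ⟨u, hu, rfl⟩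
      have := hconv.slope_mono_adjacent (Set.mem_Ioi.2 hu.1) (Set.mem_Ioi.2 hy) hu.2 hya
      simpa [slope_def_field] using this
    have hpos : 0 < y - a := by linarith
    rw [le_div_iff₀ hpos] at hle
    nlinarith

lemma jensen_step (hconv : ConvexOn ℝ (Set.Ioi (0 : ℝ)) g)
    (hC : 0 ≤ C) (hbound : ∀ y : ℝ, 0 < y → |g y| ≤ C * (1 + y))
    {a v : ℝ} (ha : 0 < a) (hv : 0 < v) :
    g a ≤ ∫ w, g (a * Real.exp w) ∂(gaussianReal (-(v / 2)) v.toNNReal) := by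
  obtain ⟨c, hc⟩ := exists_support_line hconv ha
  set γ := gaussianReal (-(v / 2)) v.toNNReal with hγ
  have hexp : Integrable (fun w => Real.exp w) γ := integrable_exp_gaussian _ hv
  have hint : Integrable (fun w => g (a * Real.exp w)) γ :=
    integrable_payoff hconv hC hbound ha _ hv
  have haff : Integrable (fun w => (g a - c * a) + (c * a) * Real.exp w) γ :=
    (integrable_const _).add (hexp.const_mul _)
  have hle : ∀ w : ℝ, (g a - c * a) + (c * a) * Real.exp w ≤ g (a * Real.exp w) := by
    intro w
    have := hc (a * Real.exp w) (mul_pos ha (Real.exp_pos w))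
    nlinarith [this]
  calc g a = ∫ w, ((g a - c * a) + (c * a) * Real.exp w) ∂γ := by
        rw [integral_add (integrable_const _) (hexp.const_mul _), integral_const,
          integral_const_mul, hγ, integral_exp_gaussian _ hv]
        simp
    _ ≤ _ := integral_mono haff hint hle


end BSProof

/-- **Monotonicity of the Black–Scholes price in the variance parameter for convex payoffs.**
Let `g : (0,∞) → ℝ` be convex with `|g y| ≤ C (1 + y)`, `r ∈ ℝ`, `δ > 0`, `x > 0`, and for
`θ > 0` let `γ_θ` be the Gaussian measure with mean `(r − θ/2) δ` and variance `θ δ`.  Then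
`θ ↦ e^{−rδ} ∫ g(x e^z) γ_θ(dz)` is nondecreasing on `(0,∞)`. -/
theorem bs_price_monotone_in_variance
    (g : ℝ → ℝ) (hconv : ConvexOn ℝ (Set.Ioi (0 : ℝ)) g)
    (C : ℝ) (hC : 0 ≤ C) (hbound : ∀ y : ℝ, 0 < y → |g y| ≤ C * (1 + y))
    (r δ x : ℝ) (hδ : 0 < δ) (hx : 0 < x) :
    MonotoneOn
      (fun θ : ℝ => Real.exp (-(r * δ)) *
        ∫ z, g (x * Real.exp z)
          ∂(gaussianReal ((r - θ / 2) * δ) ((θ * δ).toNNReal)))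
      (Set.Ioi (0 : ℝ)) := by

  intro θ₁ hθ₁ θ₂ hθ₂ hle
  rcases eq_or_lt_of_le hle with h | h
  · subst h; exact le_rfl
  simp only
  have hθ₁' : (0:ℝ) < θ₁ := hθ₁
  have hv₁ : 0 < θ₁ * δ := mul_pos hθ₁' hδ
  have hvΔ : 0 < (θ₂ - θ₁) * δ := mul_pos (by linarith) hδ
  set m₁ : ℝ := (r - θ₁ / 2) * δ with hm₁
  set v₁ : ℝ := θ₁ * δ with hv₁def
  set vΔ : ℝ := (θ₂ - θ₁) * δ with hvΔdef
  set mΔ : ℝ := -(vΔ / 2) with hmΔ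
  have hmsum : m₁ + mΔ = (r - θ₂ / 2) * δ := by rw [hm₁, hmΔ, hvΔdef]; ring
  have hvsum : v₁ + vΔ = θ₂ * δ := by rw [hv₁def, hvΔdef]; ring
  have hmap := BSProof.gaussian_map_add m₁ mΔ hv₁ hvΔ
  rw [hmsum, hvsum] at hmap
  set γ₁ := gaussianReal m₁ v₁.toNNReal with hγ₁
  set ν := gaussianReal mΔ vΔ.toNNReal with hν
  set γ₂ := gaussianReal ((r - θ₂ / 2) * δ) ((θ₂ * δ).toNNReal) with hγ₂
  have hcont : Continuous (fun z => g (x * Real.exp z)) := BSProof.payoff_continuous hconv hx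
  have hint₂ : Integrable (fun z => g (x * Real.exp z)) γ₂ := by
    have := BSProof.integrable_payoff hconv hC hbound hx ((r - θ₂ / 2) * δ)
      (mul_pos (lt_trans hθ₁' h) hδ)
    simpa [hγ₂] using this
  have hprod : Integrable (fun p : ℝ × ℝ => g (x * Real.exp (p.1 + p.2))) (γ₁.prod ν) := by
    have h1 : Integrable (fun z => g (x * Real.exp z))
        (Measure.map (fun p : ℝ × ℝ => p.1 + p.2) (γ₁.prod ν)) := by rwa [hmap]
    exact (integrable_map_measure hcont.aestronglyMeasurable
      measurable_add.aemeasurable).mp h1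
  have key : (∫ z, g (x * Real.exp z) ∂γ₂)
      = ∫ z, ∫ w, g ((x * Real.exp z) * Real.exp w) ∂ν ∂γ₁ := by
    rw [← hmap, integral_map measurable_add.aemeasurable
      (by rw [hmap]; exact hcont.aestronglyMeasurable)]
    rw [MeasureTheory.integral_prod _ hprod]
    refine integral_congr_ae (Filter.Eventually.of_forall fun z => ?_)
    refine integral_congr_ae (Filter.Eventually.of_forall fun w => ?_)
    simp [Real.exp_add, mul_assoc]
  have hmono : (∫ z, g (x * Real.exp z) ∂γ₁)
      ≤ ∫ z, ∫ w, g ((x * Real.exp z) * Real.exp w) ∂ν ∂γ₁ := by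
    have hint₁ : Integrable (fun z => g (x * Real.exp z)) γ₁ :=
      BSProof.integrable_payoff hconv hC hbound hx m₁ hv₁
    have hout : Integrable (fun z => ∫ w, g ((x * Real.exp z) * Real.exp w) ∂ν) γ₁ := by
      refine hprod.integral_prod_left.congr (Filter.Eventually.of_forall fun z => ?_)
      refine integral_congr_ae (Filter.Eventually.of_forall fun w => ?_)
      simp [Real.exp_add, mul_assoc]
    refine integral_mono hint₁ hout fun z => ?_
    exact BSProof.jensen_step hconv hC hbound (mul_pos hx (Real.exp_pos z)) hvΔ
  rw [key]
  exact mul_le_mul_of_nonneg_left hmono (Real.exp_nonneg _)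
end
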